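/- arXiv:0709.0821 — 3 statements merged into one kernel-verified Lean document; each statement's English description precedes it below -/
import Mathlib

section
/- Let G = (V, E) be a simple graph with countable vertex set V in which every vertex has at most D neighbours (D ∈ ℕ), and let Δ_G be the graph Laplacian on ℓ²(V). Then zero is an eigenvalue of Δ_G (i.e. there exists a nonzero φ ∈ ℓ²(V) with Δ_G φ = 0) if and only if G possesses a finite connected component. -/
/-!
An `ℓ²` function tends to zero at infinity, so if it is nonzero its modulus attains a maximum at
some vertex. If the function is harmonic, its value there is the average of the neighbouring values,
none of larger modulus, so all of them coincide with it; the function is therefore a nonzero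
constant on the whole component of that vertex, which must be finite. Conversely, the indicator of
a finite component is a nonzero harmonic `ℓ²` function.
-/

open Filter Topology

lemma Memℓp.tendsto_norm_cofinite_zero {α : Type*} {E : α → Type*} [∀ i, NormedAddCommGroup (E i)]
    {p : ENNReal} {f : ∀ i, E i} (hf : Memℓp f p) (hp : 0 < p.toReal) :
    Tendsto (fun i => ‖f i‖) cofinite (𝓝 0) := by
  have hpow := (hf.summable hp).tendsto_cofinite_zero
  have hroot : ContinuousAt (fun x : ℝ => x ^ p.toReal⁻¹) 0 :=
    Real.continuousAt_rpow_const _ _ (Or.inr (inv_pos.2 hp).le)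
  have := hroot.tendsto.comp hpow
  rw [Real.zero_rpow (inv_pos.2 hp).ne'] at this
  refine this.congr fun i => ?_
  exact Real.rpow_rpow_inv (norm_nonneg _) hp.ne'

lemma finite_setOf_le_of_tendsto_cofinite_zero {α : Type*} {f : α → ℝ}
    (hf : Tendsto f cofinite (𝓝 0)) {ε : ℝ} (hε : 0 < ε) : {x | ε ≤ f x}.Finite := by
  simpa using eventually_cofinite.1 (hf.eventually_lt_const hε)

lemma exists_forall_le_of_tendsto_cofinite_zero {α : Type*} {f : α → ℝ}
    (hf : Tendsto f cofinite (𝓝 0)) {x₁ : α} (hx₁ : 0 < f x₁) : ∃ x₀, ∀ x, f x ≤ f x₀ := by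
  obtain ⟨x₀, hx₀, hmax⟩ := Set.exists_max_image _ f
    (finite_setOf_le_of_tendsto_cofinite_zero hf hx₁) ⟨x₁, le_refl (f x₁)⟩
  refine ⟨x₀, fun x => ?_⟩
  rcases le_total (f x₁) (f x) with h | h
  · exact hmax x h
  · exact h.trans hx₀

lemma eq_of_norm_le_of_sum_sub_eq_zero {E ι : Type*} [NormedAddCommGroup E] [InnerProductSpace ℝ E]
    {s : Finset ι} {z : ι → E} {a : E} (hz : ∀ i ∈ s, ‖z i‖ ≤ ‖a‖)
    (hsum : ∑ i ∈ s, (a - z i) = 0) : ∀ i ∈ s, z i = a := by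
  have hsz : ∑ i ∈ s, z i = s.card • a := by
    rw [Finset.sum_sub_distrib, sub_eq_zero, Finset.sum_const] at hsum
    exact hsum.symm
  have hdist : ∑ i ∈ s, ‖z i - a‖ ^ 2 ≤ 0 := calc
    ∑ i ∈ s, ‖z i - a‖ ^ 2 = ∑ i ∈ s, (‖z i‖ ^ 2 + ‖a‖ ^ 2) - 2 * inner ℝ (∑ i ∈ s, z i) a := by
      simp only [norm_sub_sq_real, sum_inner, Finset.mul_sum, ← Finset.sum_sub_distrib]
      exact Finset.sum_congr rfl fun _ _ => by ring
    _ ≤ ∑ _i ∈ s, 2 * ‖a‖ ^ 2 - 2 * inner ℝ (∑ i ∈ s, z i) a := by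
      gcongr with i hi
      nlinarith [hz i hi, norm_nonneg (z i)]
    _ = 0 := by
      rw [hsz, ← Nat.cast_smul_eq_nsmul ℝ, real_inner_smul_left, real_inner_self_eq_norm_sq,
        Finset.sum_const, nsmul_eq_mul]
      ring
  intro i hi
  have := (Finset.sum_eq_zero_iff_of_nonneg fun j _ => sq_nonneg ‖z j - a‖).1
    (le_antisymm hdist (by positivity)) i hi
  simpa [sub_eq_zero] using this

namespace SimpleGraph

variable {V E : Type*} (G : SimpleGraph V)

def IsHarmonic [AddCommGroup E] [TopologicalSpace E] (f : V → E) : Prop :=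
  ∀ v, ∑' w : G.neighborSet v, (f v - f w) = 0

variable {G}

lemma isHarmonic_indicator_supp [AddCommGroup E] [TopologicalSpace E]
    (c : G.ConnectedComponent) (a : E) : G.IsHarmonic (c.supp.indicator fun _ => a) := by
  intro v
  have hterm : ∀ w : G.neighborSet v,
      c.supp.indicator (fun _ => a) v - c.supp.indicator (fun _ => a) w = 0 := fun w => by
    have hvw : G.Adj v w := w.2
    by_cases hv : v ∈ c.supp
    · simp [hv, (c.mem_supp_congr_adj hvw).1 hv]
    · simp [hv, mt (c.mem_supp_congr_adj hvw).2 hv]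
  simp [hterm]

lemma IsHarmonic.apply_eq_of_adj [NormedAddCommGroup E] [InnerProductSpace ℝ E]
    (hfin : ∀ v, (G.neighborSet v).Finite) {f : V → E} (hf : G.IsHarmonic f) {v₀ v w : V}
    (hmax : ∀ u, ‖f u‖ ≤ ‖f v₀‖) (hv : f v = f v₀) (hvw : G.Adj v w) : f w = f v₀ := by
  have := (hfin v).fintype
  have hsum : ∑ u : G.neighborSet v, (f v - f u) = 0 := by
    rw [← tsum_fintype (L := .unconditional _)]
    exact hf v
  rw [← hv]
  exact eq_of_norm_le_of_sum_sub_eq_zero (s := Finset.univ) (z := fun u : G.neighborSet v => f u)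
    (fun u _ => hv ▸ hmax u) hsum ⟨w, hvw⟩ (Finset.mem_univ _)

lemma IsHarmonic.apply_eq_of_reachable [NormedAddCommGroup E] [InnerProductSpace ℝ E]
    (hfin : ∀ v, (G.neighborSet v).Finite) {f : V → E} (hf : G.IsHarmonic f) {v₀ v : V}
    (hmax : ∀ u, ‖f u‖ ≤ ‖f v₀‖) (hv : G.Reachable v₀ v) : f v = f v₀ := by
  obtain ⟨p⟩ := hv
  suffices ∀ {x y : V} (_ : G.Walk x y), f x = f v₀ → f y = f v₀ from this p rfl
  intro x y q
  induction q with
  | nil => exact id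
  | cons hadj _ ih => exact fun hx => ih (hf.apply_eq_of_adj hfin hmax hx hadj)

end SimpleGraph

theorem graph_laplacian_zero_eigenvalue_iff_finite_component_general
    {V : Type*} (G : SimpleGraph V) (D : ℕ)
    (hdeg : ∀ v : V, (G.neighborSet v).Finite ∧ (G.neighborSet v).ncard ≤ D)
    (Δ : lp (fun _ : V => ℂ) 2 →L[ℂ] lp (fun _ : V => ℂ) 2)
    (hΔ : ∀ (φ : lp (fun _ : V => ℂ) 2) (v : V),
      Δ φ v = ∑' w : G.neighborSet v, (φ v - φ (w : V))) :
    (∃ φ : lp (fun _ : V => ℂ) 2, φ ≠ 0 ∧ Δ φ = 0) ↔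
      ∃ c : G.ConnectedComponent, c.supp.Finite := by
  have hker : ∀ φ, Δ φ = 0 ↔ G.IsHarmonic ⇑φ := fun φ => by
    simp only [lp.ext_iff, funext_iff, lp.coeFn_zero, Pi.zero_apply, hΔ, SimpleGraph.IsHarmonic]
  constructor
  · rintro ⟨φ, hφ, hΔφ⟩
    have hφ0 := (lp.memℓp φ).tendsto_norm_cofinite_zero (by norm_num)
    obtain ⟨u, hu⟩ : ∃ u, φ u ≠ 0 := by
      by_contra! h
      exact hφ (lp.ext (funext h))
    obtain ⟨v₀, hmax⟩ := exists_forall_le_of_tendsto_cofinite_zero hφ0 (norm_pos_iff.2 hu)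
    refine ⟨G.connectedComponentMk v₀, (finite_setOf_le_of_tendsto_cofinite_zero hφ0
      ((norm_pos_iff.2 hu).trans_le (hmax u))).subset fun v hv => ?_⟩
    have hconst := ((hker φ).1 hΔφ).apply_eq_of_reachable (fun v => (hdeg v).1) hmax
      (SimpleGraph.ConnectedComponent.exact hv).symm
    simp [hconst]
  · rintro ⟨c, hc⟩
    obtain ⟨v, rfl⟩ := c.exists_rep
    have hmem : Memℓp ((G.connectedComponentMk v).supp.indicator fun _ => (1 : ℂ)) 2 :=
      (memℓp_zero (hc.subset Set.support_indicator_subset)).of_exponent_ge zero_le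
    refine ⟨⟨_, hmem⟩, fun h => ?_, (hker _).2 (SimpleGraph.isHarmonic_indicator_supp _ _)⟩
    simpa using congrArg (fun φ : lp (fun _ : V => ℂ) 2 => φ v) h

/-- Let `G = (V, E)` be a simple graph with countable vertex set in which every
vertex has at most `D` neighbours, and let `Δ` be the graph Laplacian on `ℓ²(V)`. Then zero is
an eigenvalue of `Δ` (i.e. there is a nonzero `φ ∈ ℓ²(V)` with `Δ φ = 0`) if and only if `G`
possesses a finite connected component. -/
theorem graph_laplacian_zero_eigenvalue_iff_finite_component
    {V : Type*} [Countable V] (G : SimpleGraph V) (D : ℕ)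
    (hdeg : ∀ v : V, (G.neighborSet v).Finite ∧ (G.neighborSet v).ncard ≤ D)
    (Δ : lp (fun _ : V => ℂ) 2 →L[ℂ] lp (fun _ : V => ℂ) 2)
    (hΔ : ∀ (φ : lp (fun _ : V => ℂ) 2) (v : V),
      Δ φ v = ∑' w : G.neighborSet v, (φ v - φ (w : V))) :
    (∃ φ : lp (fun _ : V => ℂ) 2, φ ≠ 0 ∧ Δ φ = 0) ↔
      ∃ c : G.ConnectedComponent, c.supp.Finite :=
  graph_laplacian_zero_eigenvalue_iff_finite_component_general G D hdeg Δ hΔ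
end

section
/- Let G = (V, E) be an infinite connected simple graph with countable vertex set in which every vertex has at most D neighbours, where D ∈ ℕ with D ≥ 2, and let p ∈ [0,1] satisfy p(D − 1) < 1. Then for every v ∈ V the percolation probability vanishes: θ_{G,v}(p) := ℙ_p({ω ∈ Ω_G : |C_v(ω)| = ∞}) = 0. Consequently, the critical probability p_c(G) = sup{p ∈ [0,1] : θ_{G,v}(p) = 0} satisfies p_c(G) ≥ 1/(D − 1). -/
open MeasureTheory
open scoped ENNReal

noncomputable section

def openSubgraph {V : Type*} (G : SimpleGraph V) (ω : G.edgeSet → Bool) : SimpleGraph V where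
  Adj u w := ∃ h : G.Adj u w, ω ⟨s(u, w), G.mem_edgeSet.mpr h⟩ = true
  symm := by
    constructor
    rintro u w ⟨h, hω⟩
    refine ⟨h.symm, ?_⟩
    convert hω using 2
    exact Subtype.ext Sym2.eq_swap
  loopless := by
    constructor
    rintro u ⟨h, -⟩
    exact G.loopless.irrefl u h

def IsBernoulliPercolation {V : Type*} (G : SimpleGraph V)
    (ℙ : Measure (G.edgeSet → Bool)) (p : ℝ) : Prop :=
  ∀ (F : Finset G.edgeSet) (σ : G.edgeSet → Bool),
    ℙ {ω | ∀ e ∈ F, ω e = σ e} =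
      ∏ e ∈ F, (if σ e = true then ENNReal.ofReal p else ENNReal.ofReal (1 - p))

/-!
If the open cluster of `v` is infinite, then for every `n` some self-avoiding open path with `n`
edges ends at `v`. With degrees at most `D` there are at most `D (D - 1)ⁿ` self-avoiding paths
with `n + 1` edges ending at `v`, and each is open with probability `pⁿ⁺¹`, so
`θ(p) ≤ D p (p (D - 1))ⁿ → 0` when `p (D - 1) < 1`. Hence every `q < 1 / (D - 1)` lies in the
set whose supremum is `p_c`.
-/

open Filter Topology Finset

namespace SimpleGraph

variable {V : Type*} {G H : SimpleGraph V} {u v : V} {n : ℕ} {t : List V}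

variable (G) in
/-- `t` is the vertex list of a self-avoiding path with `n` edges in `G` ending at `v`; paths
are extended at the head of the list. -/
def IsSelfAvoidingPath (v : V) (n : ℕ) (t : List V) : Prop :=
  t.IsChain G.Adj ∧ t.Nodup ∧ t.length = n + 1 ∧ t.getLast? = some v

lemma IsSelfAvoidingPath.mono (hGH : G ≤ H) (h : G.IsSelfAvoidingPath v n t) :
    H.IsSelfAvoidingPath v n t :=
  ⟨h.1.imp fun _ _ hab => hGH hab, h.2⟩

lemma isSelfAvoidingPath_cons {x : V} {s : List V} :
    G.IsSelfAvoidingPath v (n + 1) (x :: s) ↔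
      G.IsSelfAvoidingPath v n s ∧ G.Adj x (s.headD v) ∧ x ∉ s := by
  rcases s with _ | ⟨b, s⟩
  · simp [IsSelfAvoidingPath]
  · simp only [IsSelfAvoidingPath, List.isChain_cons_cons, List.nodup_cons, List.length_cons,
      List.getLast?_cons_cons, List.headD_cons, Nat.add_right_cancel_iff]
    tauto

lemma Walk.IsPath.isSelfAvoidingPath_drop {q : G.Walk u v} (hq : q.IsPath) (hn : n ≤ q.length) :
    G.IsSelfAvoidingPath v n (q.support.drop (q.length - n)) := by
  refine ⟨q.isChain_adj_support.drop _, hq.support_nodup.sublist (List.drop_sublist _ _),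
    by simp only [List.length_drop, length_support]; omega, ?_⟩
  rw [List.getLast?_drop, if_neg (by simp only [length_support]; omega),
    List.getLast?_eq_some_getLast (by simp), getLast_support]

lemma finite_setOf_exists_walk_length_le [G.LocallyFinite] (v : V) (n : ℕ) :
    {u | ∃ q : G.Walk u v, q.length ≤ n}.Finite := by
  induction n with
  | zero =>
    refine (Set.finite_singleton v).subset ?_
    rintro u ⟨q, hq⟩
    exact Walk.eq_of_length_eq_zero (Nat.le_zero.mp hq)
  | succ n ih =>
    refine ((ih.biUnion fun w _ => (G.neighborSet w).toFinite).insert v).subset ?_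
    rintro u ⟨_ | ⟨hadj, q⟩, hq⟩
    · exact Set.mem_insert _ _
    · exact Set.mem_insert_of_mem _ (Set.mem_biUnion ⟨q, by simpa using hq⟩ hadj.symm)

lemma exists_isSelfAvoidingPath_of_infinite_supp [G.LocallyFinite]
    (h : (G.connectedComponentMk v).supp.Infinite) (n : ℕ) :
    ∃ t, G.IsSelfAvoidingPath v n t := by
  classical
  obtain ⟨u, hu, hfar⟩ := (h.sdiff (G.finite_setOf_exists_walk_length_le v n)).nonempty
  have huv : G.Reachable u v := ConnectedComponent.exact hu
  let q := huv.some.toPath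
  have hlen : n ≤ q.1.length := by
    by_contra! hlt
    exact hfar ⟨q.1, hlt.le⟩
  exact ⟨_, q.2.isSelfAvoidingPath_drop hlen⟩

variable [DecidableEq V] [G.LocallyFinite]

variable (G) in
def selfAvoidingPaths (v : V) : ℕ → Finset (List V)
  | 0 => {[v]}
  | n + 1 => (selfAvoidingPaths v n).biUnion fun t =>
      ((G.neighborFinset (t.headD v)).filter (· ∉ t)).image (· :: t)

lemma mem_selfAvoidingPaths : t ∈ G.selfAvoidingPaths v n ↔ G.IsSelfAvoidingPath v n t := by
  induction n generalizing t with
  | zero =>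
    simp only [selfAvoidingPaths, mem_singleton, IsSelfAvoidingPath, zero_add,
      List.length_eq_one_iff]
    constructor
    · rintro rfl
      simp
    · rintro ⟨-, -, ⟨a, rfl⟩, hlast⟩
      simpa using hlast
  | succ n ih =>
    rcases t with _ | ⟨x, s⟩
    · simp [selfAvoidingPaths, IsSelfAvoidingPath]
    · simp only [selfAvoidingPaths, mem_biUnion, mem_image, mem_filter, mem_neighborFinset,
        List.cons.injEq, isSelfAvoidingPath_cons, ih]
      constructor
      · rintro ⟨s, hs, x, ⟨hadj, hx⟩, rfl, rfl⟩
        exact ⟨hs, hadj.symm, hx⟩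
      · rintro ⟨hs, hadj, hx⟩
        exact ⟨s, hs, x, ⟨hadj.symm, hx⟩, rfl, rfl⟩

lemma card_selfAvoidingPaths_succ_le_sum (v : V) (n : ℕ) :
    #(G.selfAvoidingPaths v (n + 1)) ≤
      ∑ t ∈ G.selfAvoidingPaths v n, #((G.neighborFinset (t.headD v)).filter (· ∉ t)) :=
  card_biUnion_le.trans (sum_le_sum fun _ _ => card_image_le)

/-- A path that already has an edge cannot step back to its second vertex. -/
lemma card_filter_notMem_neighborFinset_le (ht : G.IsSelfAvoidingPath v (n + 1) t) :
    #((G.neighborFinset (t.headD v)).filter (· ∉ t)) ≤ G.degree (t.headD v) - 1 := by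
  obtain ⟨a, b, s, rfl⟩ : ∃ a b s, t = a :: b :: s := by
    rcases t with _ | ⟨a, _ | ⟨b, s⟩⟩ <;> simp_all [IsSelfAvoidingPath]
  have hb : b ∈ G.neighborFinset a := by
    simpa using (List.isChain_cons_cons.mp ht.1).1
  rw [← card_neighborFinset_eq_degree, List.headD_cons, ← card_erase_of_mem hb]
  refine card_le_card fun x hx => mem_erase.mpr ⟨?_, (mem_filter.mp hx).1⟩
  rintro rfl
  simp at hx

lemma card_selfAvoidingPaths_succ_le {D : ℕ} (hdeg : ∀ w, G.degree w ≤ D) (v : V) (n : ℕ) :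
    #(G.selfAvoidingPaths v (n + 1)) ≤ D * (D - 1) ^ n := by
  induction n with
  | zero =>
    calc #(G.selfAvoidingPaths v 1) ≤ #(G.neighborFinset v) := by
          refine (G.card_selfAvoidingPaths_succ_le_sum v 0).trans ?_
          simp only [selfAvoidingPaths, sum_singleton, List.headD_cons]
          exact card_filter_le _ _
      _ ≤ D := (card_neighborFinset_eq_degree G v).trans_le (hdeg v)
      _ = D * (D - 1) ^ 0 := by ring
  | succ n ih =>
    calc #(G.selfAvoidingPaths v (n + 2))
        ≤ ∑ _t ∈ G.selfAvoidingPaths v (n + 1), (D - 1) := by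
          refine (G.card_selfAvoidingPaths_succ_le_sum v _).trans (sum_le_sum fun t ht => ?_)
          exact (card_filter_notMem_neighborFinset_le (mem_selfAvoidingPaths.mp ht)).trans
            (Nat.sub_le_sub_right (hdeg _) 1)
      _ = #(G.selfAvoidingPaths v (n + 1)) * (D - 1) := by rw [sum_const, smul_eq_mul]
      _ ≤ D * (D - 1) ^ n * (D - 1) := Nat.mul_le_mul_right _ ih
      _ = D * (D - 1) ^ (n + 1) := by ring

end SimpleGraph

section Percolation

open SimpleGraph

variable {V : Type*} {G : SimpleGraph V}

lemma openSubgraph_le (ω : G.edgeSet → Bool) : openSubgraph G ω ≤ G :=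
  fun _ _ h => h.1

/-- The last conjunct is the induction invariant showing that the edges of `t` are distinct. -/
lemma exists_finset_isChain_openSubgraph_iff :
    ∀ t : List V, t.IsChain G.Adj → t.Nodup → ∃ F : Finset G.edgeSet, #F = t.length - 1 ∧
      (∀ ω, t.IsChain (openSubgraph G ω).Adj ↔ ∀ e ∈ F, ω e = true) ∧
      ∀ e ∈ F, ∀ x ∈ (e : Sym2 V), x ∈ t
  | [], _, _ => ⟨∅, by simp⟩
  | [_], _, _ => ⟨∅, by simp⟩
  | a :: b :: s, hc, hn => by
    classical
    obtain ⟨hab, hc⟩ := List.isChain_cons_cons.mp hc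
    obtain ⟨F, hcard, hopen, hverts⟩ :=
      exists_finset_isChain_openSubgraph_iff (b :: s) hc hn.of_cons
    let e : G.edgeSet := ⟨s(a, b), hab⟩
    have he : e ∉ F := fun he => (List.nodup_cons.mp hn).1 (hverts e he a (Sym2.mem_mk_left a b))
    refine ⟨insert e F, ?_, fun ω => ?_, ?_⟩
    · rw [card_insert_of_notMem he, hcard]
      simp
    · rw [List.isChain_cons_cons, hopen ω, forall_mem_insert]
      simp [openSubgraph, e, hab]
    · simp only [forall_mem_insert, e, Sym2.mem_iff]
      exact ⟨by grind, fun e' he' x hx => List.mem_cons_of_mem a (hverts e' he' x hx)⟩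

variable {ℙ : Measure (G.edgeSet → Bool)} {p : ℝ}

lemma IsBernoulliPercolation.measure_forall_eq_true (hℙ : IsBernoulliPercolation G ℙ p)
    (F : Finset G.edgeSet) : ℙ {ω | ∀ e ∈ F, ω e = true} = ENNReal.ofReal p ^ #F := by
  simpa using hℙ F fun _ => true

lemma IsBernoulliPercolation.measure_isChain_openSubgraph (hℙ : IsBernoulliPercolation G ℙ p)
    {v : V} {n : ℕ} {t : List V} (ht : G.IsSelfAvoidingPath v n t) :
    ℙ {ω | t.IsChain (openSubgraph G ω).Adj} = ENNReal.ofReal p ^ n := by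
  obtain ⟨F, hcard, hopen, -⟩ := exists_finset_isChain_openSubgraph_iff t ht.1 ht.2.1
  simp_rw [hopen, hℙ.measure_forall_eq_true, hcard, ht.2.2.1, Nat.add_sub_cancel]

lemma IsBernoulliPercolation.measure_infinite_supp_le [DecidableEq V] [G.LocallyFinite]
    (hℙ : IsBernoulliPercolation G ℙ p) (v : V) (n : ℕ) :
    ℙ {ω | ((openSubgraph G ω).connectedComponentMk v).supp.Infinite} ≤
      #(G.selfAvoidingPaths v n) * ENNReal.ofReal p ^ n := by
  have hsub : {ω | ((openSubgraph G ω).connectedComponentMk v).supp.Infinite} ⊆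
      ⋃ t ∈ G.selfAvoidingPaths v n, {ω | t.IsChain (openSubgraph G ω).Adj} := by
    intro ω hω
    have : (openSubgraph G ω).LocallyFinite := fun w =>
      ((G.neighborSet w).toFinite.subset fun _ h => openSubgraph_le ω h).fintype
    obtain ⟨t, ht⟩ := exists_isSelfAvoidingPath_of_infinite_supp hω n
    exact Set.mem_biUnion (mem_selfAvoidingPaths.mpr (ht.mono (openSubgraph_le ω))) ht.1
  calc _ ≤ ∑ t ∈ G.selfAvoidingPaths v n, ℙ {ω | t.IsChain (openSubgraph G ω).Adj} :=
        (measure_mono hsub).trans (measure_biUnion_finset_le _ _)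
    _ = _ := by
      rw [sum_congr rfl fun t ht =>
        hℙ.measure_isChain_openSubgraph (mem_selfAvoidingPaths.mp ht), sum_const,
        nsmul_eq_mul]

lemma tendsto_natCast_mul_pow_mul_ofReal_pow {D : ℕ} (hD : 1 ≤ D) (hp : 0 ≤ p)
    (hpD : p * ((D : ℝ) - 1) < 1) :
    Tendsto (fun n : ℕ => ((D * (D - 1) ^ n : ℕ) : ℝ≥0∞) * ENNReal.ofReal p ^ (n + 1))
      atTop (𝓝 0) := by
  have hgeom : Tendsto (fun n : ℕ => D * p * (p * ((D : ℝ) - 1)) ^ n) atTop (𝓝 0) := by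
    simpa using (tendsto_pow_atTop_nhds_zero_of_lt_one
      (mul_nonneg hp (sub_nonneg.mpr (Nat.one_le_cast.mpr hD))) hpD).const_mul (D * p)
  have hgeom' := ENNReal.tendsto_ofReal hgeom
  rw [ENNReal.ofReal_zero] at hgeom'
  refine hgeom'.congr fun n => ?_
  rw [← ENNReal.ofReal_pow hp, ← ENNReal.ofReal_natCast, ← ENNReal.ofReal_mul (by positivity),
    mul_pow]
  push_cast [Nat.cast_sub hD]
  congr 1
  ring

lemma IsBernoulliPercolation.measure_infinite_supp_eq_zero [G.LocallyFinite] {D : ℕ}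
    (hD : 1 ≤ D) (hdeg : ∀ w, G.degree w ≤ D) (hp : 0 ≤ p) (hpD : p * ((D : ℝ) - 1) < 1)
    (hℙ : IsBernoulliPercolation G ℙ p) (v : V) :
    ℙ {ω | ((openSubgraph G ω).connectedComponentMk v).supp.Infinite} = 0 := by
  classical
  refine le_antisymm (ge_of_tendsto' (tendsto_natCast_mul_pow_mul_ofReal_pow hD hp hpD)
    fun n => (hℙ.measure_infinite_supp_le v (n + 1)).trans ?_) bot_le
  gcongr
  exact_mod_cast G.card_selfAvoidingPaths_succ_le hdeg v n

end Percolation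

lemma le_csSup_of_Ico_subset {α : Type*} [ConditionallyCompleteLinearOrder α] [DenselyOrdered α]
    {a b : α} {S : Set α} (hab : a < b) (hS : BddAbove S) (h : Set.Ico a b ⊆ S) : b ≤ sSup S :=
  (csSup_Ico hab).ge.trans (csSup_le_csSup hS (Set.nonempty_Ico.mpr hab) h)

theorem percolation_prob_zero_and_critical_prob_lower_bound_general
    {V : Type*} (G : SimpleGraph V)
    (D : ℕ) (hD : 2 ≤ D)
    (hdeg : ∀ v : V, (G.neighborSet v).Finite ∧ (G.neighborSet v).ncard ≤ D)
    (p : ℝ) (hp0 : 0 ≤ p) (hpD : p * ((D : ℝ) - 1) < 1)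
    (ℙ : Measure (G.edgeSet → Bool))
    (hℙ : IsBernoulliPercolation G ℙ p) :
    (∀ v : V, ℙ {ω | ((openSubgraph G ω).connectedComponentMk v).supp.Infinite} = 0) ∧
    (∀ v : V,
      1 / ((D : ℝ) - 1) ≤
        sSup {q : ℝ | q ∈ Set.Icc (0 : ℝ) 1 ∧
          ∀ Q : Measure (G.edgeSet → Bool), IsProbabilityMeasure Q →
            IsBernoulliPercolation G Q q →
            Q {ω | ((openSubgraph G ω).connectedComponentMk v).supp.Infinite} = 0}) := by
  have : G.LocallyFinite := fun w => (hdeg w).1.fintype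
  have hdegD (w : V) : G.degree w ≤ D := by
    rw [← G.card_neighborFinset_eq_degree, SimpleGraph.neighborFinset,
      ← Set.ncard_eq_toFinset_card']
    exact (hdeg w).2
  have hD1 : (1 : ℝ) ≤ D - 1 := by
    have : (2 : ℝ) ≤ D := by exact_mod_cast hD
    linarith
  refine ⟨(hℙ.measure_infinite_supp_eq_zero (by omega) hdegD hp0 hpD ·), fun v =>
    le_csSup_of_Ico_subset (by positivity) ⟨1, fun q hq => hq.1.2⟩ ?_⟩
  rintro q ⟨hq0, hq⟩
  have hqD : q * ((D : ℝ) - 1) < 1 := (lt_div_iff₀ (by linarith)).mp hq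
  refine ⟨⟨hq0, hq.le.trans ((div_le_one (by linarith)).mpr hD1)⟩, fun Q _ hQ => ?_⟩
  exact hQ.measure_infinite_supp_eq_zero (by omega) hdegD hq0 hqD v

/-- Let `G = (V, E)` be an infinite connected simple graph with countable
vertex set in which every vertex has at most `D` neighbours (`D ≥ 2`), and let `p ∈ [0,1]`
satisfy `p(D − 1) < 1`. Then for every `v ∈ V` the percolation probability vanishes:
`θ_{G,v}(p) = ℙ_p(|C_v| = ∞) = 0`. Consequently, the critical probability
`p_c(G) = sup {q ∈ [0,1] : θ_{G,v}(q) = 0}` satisfies `p_c(G) ≥ 1/(D − 1)`. -/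
theorem percolation_prob_zero_and_critical_prob_lower_bound
    {V : Type*} [Countable V] [Infinite V] (G : SimpleGraph V) (hG : G.Connected)
    (D : ℕ) (hD : 2 ≤ D)
    (hdeg : ∀ v : V, (G.neighborSet v).Finite ∧ (G.neighborSet v).ncard ≤ D)
    (p : ℝ) (hp0 : 0 ≤ p) (hp1 : p ≤ 1) (hpD : p * ((D : ℝ) - 1) < 1)
    (ℙ : Measure (G.edgeSet → Bool)) [IsProbabilityMeasure ℙ]
    (hℙ : IsBernoulliPercolation G ℙ p) :
    (∀ v : V, ℙ {ω | ((openSubgraph G ω).connectedComponentMk v).supp.Infinite} = 0) ∧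
    (∀ v : V,
      1 / ((D : ℝ) - 1) ≤
        sSup {q : ℝ | q ∈ Set.Icc (0 : ℝ) 1 ∧
          ∀ Q : Measure (G.edgeSet → Bool), IsProbabilityMeasure Q →
            IsBernoulliPercolation G Q q →
            Q {ω | ((openSubgraph G ω).connectedComponentMk v).supp.Infinite} = 0}) :=
  percolation_prob_zero_and_critical_prob_lower_bound_general G D hD hdeg p hp0 hpD ℙ hℙ
end
end

section
/- Fix d ∈ ℕ, r > 0, D ∈ ℕ with D ≥ 2, l_max ∈ (0,∞), and p ∈ [0, 1/(D−1)). Then there exists a constant λ(p) ∈ (0,∞) such that, uniformly for every simple graph G = (V, E) whose vertex set V ⊆ ℝ^d is uniformly discrete of radius r, in which every vertex has at most D neighbours, and whose edges have length at most l_max, and uniformly for every v ∈ V and every n ∈ ℕ with n ≥ 1, one has ℙ_p({ω ∈ Ω_G : |C_v(ω)| ≥ n}) ≤ 2 · exp(−n λ(p)). -/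
open MeasureTheory
open scoped ENNReal

noncomputable section

/-!
Explore the open cluster of `v` by revealing, one at a time, some unrevealed edge incident to the
vertices discovered so far. Each revealed edge is fresh, so however adaptive the choices, the
revealed states behave like i.i.d. Bernoulli(`p`) coins: summing over the binary tree of possible
histories, the probability that `m` steps reveal at least `t` open edges is at most
`c⁻ᵗ (p c + 1 - p)ᵐ` for every `c ≥ 1`.

If the cluster has at least `n` vertices, then after `m = D + (D - 1)(n - 1)` steps either the
exploration has stopped, so that the whole cluster was discovered, at most one new vertex per open
edge; or it revealed `m` distinct edges incident to the discovered set `S`, and double counting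
incidences against the degree bound gives `m + #open ≤ D #S ≤ D (1 + #open)`. Either way at least
`n - 1` revealed edges are open. Since `(D - 1) p < 1`, some `c > 1` has
`(1 + p (c - 1))ᴰ⁻¹ < c`, and the ratio of these two numbers is the rate of decay.
-/

open Finset

lemma Finset.sum_biUnion_le {ι α M : Type*} [DecidableEq α] [AddCommMonoid M] [PartialOrder M]
    [CanonicallyOrderedAdd M] (s : Finset ι) (t : ι → Finset α) (f : α → M) :
    ∑ x ∈ s.biUnion t, f x ≤ ∑ i ∈ s, ∑ x ∈ t i, f x := by
  classical
  induction s using Finset.induction_on with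
  | empty => simp
  | insert i s hi ih =>
    rw [biUnion_insert, sum_insert hi]
    calc ∑ x ∈ t i ∪ s.biUnion t, f x
        ≤ ∑ x ∈ t i ∪ s.biUnion t, f x + ∑ x ∈ t i ∩ s.biUnion t, f x := le_self_add
      _ = ∑ x ∈ t i, f x + ∑ x ∈ s.biUnion t, f x := sum_union_inter
      _ ≤ _ := by gcongr

namespace SimpleGraph

variable {V : Type*} {G : SimpleGraph V}

lemma Reachable.mem_of_adj_closed {S : Set V} (hS : ∀ a b, a ∈ S → G.Adj a b → b ∈ S)
    {a b : V} (hab : G.Reachable a b) (ha : a ∈ S) : b ∈ S := by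
  obtain ⟨w⟩ := hab
  induction w with
  | nil => exact ha
  | cons hadj _ ih => exact ih (hS _ _ ha hadj)

lemma card_filter_mem_le [DecidableEq V] {D : ℕ} (x : V)
    (hx : (G.neighborSet x).Finite ∧ (G.neighborSet x).ncard ≤ D) (R : Finset G.edgeSet) :
    #{e ∈ R | x ∈ e.val} ≤ D := by
  have hfin : (G.incidenceSet x).Finite :=
    have := hx.1.to_subtype
    Set.finite_coe_iff.mp (Finite.of_equiv _ (G.incidenceSetEquivNeighborSet x).symm)
  have hcard : (G.incidenceSet x).ncard = (G.neighborSet x).ncard := by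
    rw [← Nat.card_coe_set_eq, ← Nat.card_coe_set_eq,
      Nat.card_congr (G.incidenceSetEquivNeighborSet x)]
  rw [← card_image_of_injective _ Subtype.val_injective, ← Set.ncard_coe_finset]
  refine (Set.ncard_le_ncard ?_ hfin).trans (hcard ▸ hx.2)
  intro y hy
  obtain ⟨e, he, rfl⟩ := Finset.mem_image.mp (Finset.mem_coe.mp hy)
  exact G.edge_mem_incidenceSet_iff.mpr (Finset.mem_filter.mp he).2

/-- Double counting of the incidences between `S` and `R`: every edge of `R` meets `S`,
and those of `O` meet it twice. -/
theorem card_add_card_le_mul_card [DecidableEq V] {D : ℕ}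
    (hdeg : ∀ x, (G.neighborSet x).Finite ∧ (G.neighborSet x).ncard ≤ D)
    {S : Finset V} {R O : Finset G.edgeSet} (hOR : O ⊆ R)
    (hR : ∀ e ∈ R, ∃ x ∈ S, x ∈ (e : Sym2 V)) (hO : ∀ e ∈ O, ∀ x ∈ (e : Sym2 V), x ∈ S) :
    #R + #O ≤ D * #S := by
  have hedge : ∀ e ∈ R, 1 + (if e ∈ O then 1 else 0) ≤ #{x ∈ S | x ∈ e.val} := by
    intro e he
    split_ifs with heO
    · calc 1 + 1 = #(e : Sym2 V).toFinset :=
            (Sym2.card_toFinset_of_not_isDiag _ (G.not_isDiag_of_mem_edgeSet e.2)).symm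
        _ ≤ _ := card_le_card fun x hx =>
            mem_filter.mpr ⟨hO e heO x (Sym2.mem_toFinset.mp hx), Sym2.mem_toFinset.mp hx⟩
    · obtain ⟨x, hxS, hxe⟩ := hR e he
      exact card_pos.mpr ⟨x, mem_filter.mpr ⟨hxS, hxe⟩⟩
  calc #R + #O = ∑ e ∈ R, (1 + if e ∈ O then 1 else 0) := by
        rw [sum_add_distrib, sum_boole, filter_mem_eq_inter, inter_eq_right.mpr hOR]
        simp
    _ ≤ ∑ e ∈ R, #{x ∈ S | x ∈ e.val} := sum_le_sum hedge
    _ = ∑ x ∈ S, #{e ∈ R | x ∈ e.val} :=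
        (sum_card_bipartiteAbove_eq_sum_card_bipartiteBelow fun x (e : G.edgeSet) => x ∈ e.val).symm
    _ ≤ ∑ _x ∈ S, D := sum_le_sum fun x _ => card_filter_mem_le x (hdeg x) R
    _ = D * #S := by rw [sum_const, smul_eq_mul, mul_comm]

end SimpleGraph

lemma exists_pow_lt_of_mul_lt_one {p : ℝ} {k : ℕ} (hp0 : 0 ≤ p) (hp1 : p ≤ 1) (hpk : p * k < 1) :
    ∃ c : ℝ, 1 ≤ c ∧ (1 + p * (c - 1)) * c ≤ 2 ∧ (1 + p * (c - 1)) ^ k < c := by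
  set q := p * k with hq
  set ε := min (1 / 4) ((1 - q) / 2)
  have hq0 : 0 ≤ q := by positivity
  have hε0 : 0 < ε := lt_min (by norm_num) (by linarith)
  have hε1 : ε ≤ 1 / 4 := min_le_left _ _
  have hε2 : ε ≤ (1 - q) / 2 := min_le_right _ _
  have hqε : 0 ≤ q * ε := mul_nonneg hq0 hε0.le
  have hpε : p * ε ≤ ε := mul_le_of_le_one_left hε0.le hp1
  refine ⟨1 + ε, by linarith, by nlinarith, ?_⟩
  have hexp : Real.exp (q * ε) ≤ 1 + q * ε + (q * ε) ^ 2 := by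
    have := Real.norm_exp_sub_one_sub_id_le (x := q * ε)
      (by rw [Real.norm_of_nonneg hqε]; nlinarith)
    rw [Real.norm_eq_abs, Real.norm_eq_abs, sq_abs] at this
    linarith [le_abs_self (Real.exp (q * ε) - 1 - q * ε)]
  have hsq : (q * ε) ^ 2 ≤ ε * ε := by
    rw [sq]
    exact mul_self_le_mul_self hqε (mul_le_of_le_one_left hε0.le (by linarith))
  calc (1 + p * (1 + ε - 1)) ^ k ≤ Real.exp (p * ε) ^ k := by
        gcongr
        · nlinarith
        · linarith [Real.add_one_le_exp (p * ε)]
    _ = Real.exp (q * ε) := by rw [← Real.exp_nat_mul, hq]; ring_nf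
    _ < 1 + ε := by nlinarith [mul_pos hε0 (by linarith : 0 < 1 - q - ε)]

lemma pow_add_mul_div_pow_eq {Z c : ℝ} (hc : c ≠ 0) {D n : ℕ} (hD : 1 ≤ D) (hn : 1 ≤ n) :
    Z ^ (D + (D - 1) * (n - 1)) / c ^ (n - 1) = Z * c * (Z ^ (D - 1) / c) ^ n := by
  obtain ⟨D, rfl⟩ := Nat.exists_eq_add_of_le' hD
  obtain ⟨n, rfl⟩ := Nat.exists_eq_add_of_le' hn
  simp only [Nat.add_sub_cancel, div_pow, pow_succ, ← pow_mul]
  field_simp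
  ring

namespace Percolation

variable {E : Type*}

def bernoulliWeight (p : ℝ) (b : Bool) : ℝ≥0∞ :=
  if b = true then ENNReal.ofReal p else ENNReal.ofReal (1 - p)

/-- `IsBernoulliPercolation G` is this notion for `E = G.edgeSet`, definitionally. -/
def IsBernoulliProduct (ℙ : Measure (E → Bool)) (p : ℝ) : Prop :=
  ∀ (F : Finset E) (σ : E → Bool),
    ℙ {ω | ∀ e ∈ F, ω e = σ e} = ∏ e ∈ F, bernoulliWeight p (σ e)

def openCount (h : List (E × Bool)) : ℕ := h.countP (·.2)

lemma openCount_cons (e : E) (b : Bool) (h : List (E × Bool)) :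
    openCount ((e, b) :: h) = openCount h + if b then 1 else 0 := List.countP_cons

def weight (u : Bool → ℝ≥0∞) (h : List (E × Bool)) : ℝ≥0∞ := (h.map fun x => u x.2).prod

@[simp] lemma weight_nil (u : Bool → ℝ≥0∞) : weight u ([] : List (E × Bool)) = 1 := rfl

@[simp] lemma weight_cons (u : Bool → ℝ≥0∞) (x : E × Bool) (h : List (E × Bool)) :
    weight u (x :: h) = u x.2 * weight u h := List.prod_cons

lemma weight_mul_pow_openCount (u : Bool → ℝ≥0∞) (c : ℝ≥0∞) (h : List (E × Bool)) :
    weight (fun b => u b * if b then c else 1) h = weight u h * c ^ openCount h := by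
  induction h with
  | nil => simp [openCount]
  | cons x h ih =>
    rw [weight_cons, weight_cons, ih]
    obtain ⟨e, _ | _⟩ := x <;> simp [openCount, pow_succ] <;> ring

/-- `σ h` is the coin to reveal after the history `h` (most recent first); `none` stops. -/
abbrev Strategy (E : Type*) := List (E × Bool) → Option E

namespace Strategy

variable (σ : Strategy E)

def IsFresh : Prop := ∀ h e, σ h = some e → e ∉ h.map Prod.fst

def extend (ω : E → Bool) (h : List (E × Bool)) : List (E × Bool) :=
  match σ h with
  | none => h
  | some e => (e, ω e) :: h

def history (ω : E → Bool) : ℕ → List (E × Bool)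
  | 0 => []
  | k + 1 => σ.extend ω (history ω k)

variable [DecidableEq E]

def children (h : List (E × Bool)) : Finset (List (E × Bool)) :=
  match σ h with
  | none => {h}
  | some e => {(e, true) :: h, (e, false) :: h}

def histories : ℕ → Finset (List (E × Bool))
  | 0 => {[]}
  | k + 1 => (histories k).biUnion σ.children

variable {σ}

lemma extend_mem_children (ω : E → Bool) (h : List (E × Bool)) :
    σ.extend ω h ∈ σ.children h := by
  unfold extend children
  rcases σ h with _ | e
  · exact mem_singleton_self h
  · cases ω e <;> simp

lemma history_mem_histories (ω : E → Bool) (k : ℕ) : σ.history ω k ∈ σ.histories k := by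
  induction k with
  | zero => exact mem_singleton_self _
  | succ k ih => exact mem_biUnion.mpr ⟨_, ih, extend_mem_children ω _⟩

omit [DecidableEq E] in
lemma history_consistent (ω : E → Bool) (k : ℕ) : ∀ x ∈ σ.history ω k, ω x.1 = x.2 := by
  induction k with
  | zero => simp [history]
  | succ k ih =>
    simp only [history, extend]
    rcases σ (σ.history ω k) with _ | e
    · exact ih
    · simpa using ih

omit [DecidableEq E] in
lemma history_induction {P : List (E × Bool) → Prop} (ω : E → Bool) (h0 : P [])
    (hstep : ∀ h e, σ h = some e → P h → P ((e, ω e) :: h)) (k : ℕ) : P (σ.history ω k) := by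
  induction k with
  | zero => exact h0
  | succ k ih =>
    simp only [history, extend]
    rcases he : σ (σ.history ω k) with _ | e
    · exact ih
    · exact hstep _ e he ih

omit [DecidableEq E] in
lemma history_length_eq_or_stopped (ω : E → Bool) (k : ℕ) :
    (σ.history ω k).length = k ∨ σ (σ.history ω k) = none := by
  induction k with
  | zero => exact Or.inl rfl
  | succ k ih =>
    simp only [history, extend]
    rcases hσ : σ (σ.history ω k) with _ | e
    · simp [hσ]
    · rw [hσ] at ih
      exact Or.inl (by simpa using ih)

lemma IsFresh.nodup_of_mem_histories (hσ : σ.IsFresh) {k : ℕ} {h : List (E × Bool)}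
    (hh : h ∈ σ.histories k) : (h.map Prod.fst).Nodup := by
  induction k generalizing h with
  | zero => simp_all [histories]
  | succ k ih =>
    obtain ⟨h', hh', hh⟩ := mem_biUnion.mp hh
    unfold children at hh
    rcases he : σ h' with _ | e <;> rw [he] at hh
    · exact mem_singleton.mp hh ▸ ih hh'
    · rcases mem_insert.mp hh with rfl | hh <;> [skip; rw [mem_singleton.mp hh]] <;>
        exact List.nodup_cons.mpr ⟨hσ h' e he, ih hh'⟩

lemma sum_weight_children_le {u : Bool → ℝ≥0∞} (hu : 1 ≤ u true + u false)
    (h : List (E × Bool)) :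
    ∑ h' ∈ σ.children h, weight u h' ≤ (u true + u false) * weight u h := by
  unfold children
  rcases σ h with _ | e
  · simpa using le_mul_of_one_le_left' hu
  · rw [sum_pair (by simp)]
    simp [add_mul]

lemma sum_weight_histories_le {u : Bool → ℝ≥0∞} (hu : 1 ≤ u true + u false) (k : ℕ) :
    ∑ h ∈ σ.histories k, weight u h ≤ (u true + u false) ^ k := by
  induction k with
  | zero => simp [histories]
  | succ k ih =>
    calc ∑ h ∈ σ.histories (k + 1), weight u h
        ≤ ∑ h ∈ σ.histories k, ∑ h' ∈ σ.children h, weight u h' := sum_biUnion_le _ _ _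
      _ ≤ ∑ h ∈ σ.histories k, (u true + u false) * weight u h :=
        sum_le_sum fun h _ => sum_weight_children_le hu h
      _ ≤ (u true + u false) ^ (k + 1) := by
        rw [← mul_sum, pow_succ']
        gcongr

end Strategy

lemma IsBernoulliProduct.measure_cylinder {ℙ : Measure (E → Bool)} {p : ℝ}
    (hℙ : IsBernoulliProduct ℙ p) {h : List (E × Bool)} (hh : (h.map Prod.fst).Nodup) :
    ℙ {ω | ∀ x ∈ h, ω x.1 = x.2} = weight (bernoulliWeight p) h := by
  classical
  set τ : E → Bool := fun e => decide ((e, true) ∈ h)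
  have hτ : ∀ x ∈ h, τ x.1 = x.2 := by
    rintro ⟨e, _ | _⟩ hx
    · simp only [τ, decide_eq_false_iff_not]
      intro hx'
      simpa using List.inj_on_of_nodup_map hh hx' hx rfl
    · simpa [τ] using hx
  have hset : {ω : E → Bool | ∀ x ∈ h, ω x.1 = x.2} =
      {ω | ∀ e ∈ (h.map Prod.fst).toFinset, ω e = τ e} := by
    ext ω
    simp only [Set.mem_ofPred_eq, List.mem_toFinset, List.mem_map]
    constructor
    · rintro hω _ ⟨x, hx, rfl⟩
      rw [hω x hx, hτ x hx]
    · intro hω x hx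
      rw [hω x.1 ⟨x, hx, rfl⟩, hτ x hx]
  rw [hset, hℙ, List.prod_toFinset _ hh, List.map_map]
  exact congrArg List.prod (List.map_congr_left fun x hx => by simp [hτ x hx])

namespace Strategy

variable {σ : Strategy E}

theorem IsFresh.measure_le_openCount_mul_pow_le (hσ : σ.IsFresh) {ℙ : Measure (E → Bool)}
    {p : ℝ} (hℙ : IsBernoulliProduct ℙ p) {c : ℝ≥0∞} (hc : 1 ≤ c) (k t : ℕ) :
    ℙ {ω | t ≤ openCount (σ.history ω k)} * c ^ t ≤
      (ENNReal.ofReal p * c + ENNReal.ofReal (1 - p)) ^ k := by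
  classical
  set u : Bool → ℝ≥0∞ := fun b => bernoulliWeight p b * if b then c else 1
  have hu : u true + u false = ENNReal.ofReal p * c + ENNReal.ofReal (1 - p) := by
    simp [u, bernoulliWeight]
  have hu1 : 1 ≤ u true + u false := by
    rw [hu]
    calc (1 : ℝ≥0∞) = ENNReal.ofReal (p + (1 - p)) := by simp
      _ ≤ ENNReal.ofReal p + ENNReal.ofReal (1 - p) := ENNReal.ofReal_add_le
      _ ≤ ENNReal.ofReal p * c + ENNReal.ofReal (1 - p) := by
        gcongr
        exact le_mul_of_one_le_right' hc
  set S := (σ.histories k).filter (t ≤ openCount ·)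
  have hcover : {ω | t ≤ openCount (σ.history ω k)} ⊆ ⋃ h ∈ S, {ω | ∀ x ∈ h, ω x.1 = x.2} :=
    fun ω hω => Set.mem_biUnion (mem_filter.mpr ⟨history_mem_histories ω k, hω⟩)
      (history_consistent ω k)
  calc ℙ {ω | t ≤ openCount (σ.history ω k)} * c ^ t
      ≤ (∑ h ∈ S, ℙ {ω | ∀ x ∈ h, ω x.1 = x.2}) * c ^ t := by
        gcongr
        exact (measure_mono hcover).trans (measure_biUnion_finset_le _ _)
    _ = ∑ h ∈ S, weight (bernoulliWeight p) h * c ^ t := by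
        rw [sum_mul]
        refine sum_congr rfl fun h hh => ?_
        rw [hℙ.measure_cylinder (hσ.nodup_of_mem_histories (mem_filter.mp hh).1)]
    _ ≤ ∑ h ∈ S, weight u h := by
        refine sum_le_sum fun h hh => ?_
        rw [weight_mul_pow_openCount]
        gcongr
        exact (mem_filter.mp hh).2
    _ ≤ ∑ h ∈ σ.histories k, weight u h := sum_le_sum_of_subset (filter_subset _ _)
    _ ≤ _ := hu ▸ sum_weight_histories_le hu1 k

end Strategy

variable {V : Type*} [DecidableEq V] {G : SimpleGraph V} (v : V)

def discovered : List (G.edgeSet × Bool) → Finset V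
  | [] => {v}
  | (e, true) :: h => discovered h ∪ (e : Sym2 V).toFinset
  | (_, false) :: h => discovered h

variable {v}

lemma discovered_subset_cons (x : G.edgeSet × Bool) (h : List (G.edgeSet × Bool)) :
    discovered v h ⊆ discovered v (x :: h) := by
  obtain ⟨e, _ | _⟩ := x
  · exact subset_rfl
  · exact subset_union_left

lemma mem_discovered_self (h : List (G.edgeSet × Bool)) : v ∈ discovered v h := by
  induction h with
  | nil => exact mem_singleton_self v
  | cons x h ih => exact discovered_subset_cons x h ih

lemma mem_discovered_of_mem {h : List (G.edgeSet × Bool)} {e : G.edgeSet} (he : (e, true) ∈ h)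
    {a : V} (ha : a ∈ (e : Sym2 V)) : a ∈ discovered v h := by
  induction h with
  | nil => simp at he
  | cons x h ih =>
    rcases List.mem_cons.mp he with rfl | he
    · exact mem_union_right _ (Sym2.mem_toFinset.mpr ha)
    · exact discovered_subset_cons x h (ih he)

lemma card_discovered_cons_le {h : List (G.edgeSet × Bool)} {e : G.edgeSet}
    (he : ∃ y ∈ discovered v h, y ∈ (e : Sym2 V)) (b : Bool) :
    #(discovered v ((e, b) :: h)) ≤ #(discovered v h) + if b then 1 else 0 := by
  cases b
  · simp [discovered]
  · obtain ⟨y, hy, hye⟩ := he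
    obtain ⟨z, hz⟩ := Sym2.mem_iff_exists.mp hye
    calc #(discovered v h ∪ (e : Sym2 V).toFinset)
        ≤ #(insert z (discovered v h)) := card_le_card fun x hx => by
          rcases mem_union.mp hx with hx | hx
          · exact mem_insert_of_mem hx
          · rw [hz, Sym2.mem_toFinset, Sym2.mem_iff] at hx
            rcases hx with rfl | rfl
            · exact mem_insert_of_mem hy
            · exact mem_insert_self _ _
      _ ≤ _ := card_insert_le _ _

variable (G v) in
open Classical in
def explore : Strategy G.edgeSet := fun h =>
  if hex : ∃ e : G.edgeSet, e ∉ h.map Prod.fst ∧ ∃ x ∈ discovered v h, x ∈ (e : Sym2 V)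
  then some hex.choose else none

lemma explore_spec {h : List (G.edgeSet × Bool)} {e : G.edgeSet}
    (he : explore G v h = some e) :
    e ∉ h.map Prod.fst ∧ ∃ x ∈ discovered v h, x ∈ (e : Sym2 V) := by
  unfold explore at he
  split_ifs at he with hex
  exact Option.some_injective _ he ▸ hex.choose_spec

lemma explore_isFresh : (explore G v).IsFresh := fun _ _ he => (explore_spec he).1

lemma mem_map_fst_of_explore_eq_none {h : List (G.edgeSet × Bool)}
    (hstop : explore G v h = none) {e : G.edgeSet} (he : ∃ x ∈ discovered v h, x ∈ (e : Sym2 V)) :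
    e ∈ h.map Prod.fst := by
  unfold explore at hstop
  split_ifs at hstop with hex
  by_contra hmem
  exact hex ⟨e, hmem, he⟩

lemma card_discovered_explore_history_le (ω : G.edgeSet → Bool) (k : ℕ) :
    #(discovered v ((explore G v).history ω k)) ≤ 1 + openCount ((explore G v).history ω k) := by
  refine Strategy.history_induction (P := fun h => #(discovered v h) ≤ 1 + openCount h) ω
    (by simp [discovered, openCount]) (fun h e he hcard => ?_) k
  have hcons := card_discovered_cons_le (explore_spec he).2 (ω e)
  rw [openCount_cons]
  split_ifs at hcons ⊢ <;> omega

lemma exists_mem_discovered_of_mem_explore_history (ω : G.edgeSet → Bool) (k : ℕ) :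
    ∀ x ∈ (explore G v).history ω k,
      ∃ y ∈ discovered v ((explore G v).history ω k), y ∈ (x.1 : Sym2 V) := by
  refine Strategy.history_induction
    (P := fun h => ∀ x ∈ h, ∃ y ∈ discovered v h, y ∈ (x.1 : Sym2 V)) ω (by simp)
    (fun h e he hinc x hx => ?_) k
  obtain ⟨y, hy, hye⟩ : ∃ y ∈ discovered v h, y ∈ (x.1 : Sym2 V) := by
    rcases List.mem_cons.mp hx with rfl | hx
    exacts [(explore_spec he).2, hinc x hx]
  exact ⟨y, discovered_subset_cons _ h hy, hye⟩

lemma supp_subset_discovered {ω : G.edgeSet → Bool} {h : List (G.edgeSet × Bool)}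
    (hstop : explore G v h = none) (hω : ∀ x ∈ h, ω x.1 = x.2) :
    ((openSubgraph G ω).connectedComponentMk v).supp ⊆ discovered v h := by
  intro x hx
  have hclosed : ∀ a b, a ∈ (discovered v h : Set V) → (openSubgraph G ω).Adj a b →
      b ∈ (discovered v h : Set V) := by
    rintro a b ha ⟨hab, hopen⟩
    obtain ⟨y, hy, hye⟩ := List.mem_map.mp
      (mem_map_fst_of_explore_eq_none hstop (e := ⟨s(a, b), G.mem_edgeSet.mpr hab⟩)
        ⟨a, ha, Sym2.mem_mk_left a b⟩)
    have hyopen : y = (⟨s(a, b), _⟩, true) := Prod.ext hye (by rw [← hω y hy, hye]; exact hopen)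
    exact mem_discovered_of_mem (hyopen ▸ hy) (Sym2.mem_mk_right a b)
  have hreach : (openSubgraph G ω).Reachable v x :=
    (SimpleGraph.ConnectedComponent.exact
      ((SimpleGraph.ConnectedComponent.mem_supp_iff _ _).mp hx)).symm
  exact hreach.mem_of_adj_closed hclosed (mem_discovered_self h)

lemma length_add_openCount_le {D : ℕ}
    (hdeg : ∀ x, (G.neighborSet x).Finite ∧ (G.neighborSet x).ncard ≤ D)
    {h : List (G.edgeSet × Bool)} (hnd : (h.map Prod.fst).Nodup)
    (hinc : ∀ x ∈ h, ∃ y ∈ discovered v h, y ∈ (x.1 : Sym2 V)) :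
    h.length + openCount h ≤ D * #(discovered v h) := by
  have hcount := SimpleGraph.card_add_card_le_mul_card hdeg (S := discovered v h)
    (R := (h.map Prod.fst).toFinset) (O := ((h.filter (·.2)).map Prod.fst).toFinset)
    (fun e he => by
      simp only [List.mem_toFinset, List.mem_map, List.mem_filter] at he ⊢
      obtain ⟨x, ⟨hx, _⟩, rfl⟩ := he
      exact ⟨x, hx, rfl⟩)
    (fun e he => by
      obtain ⟨x, hx, rfl⟩ := List.mem_map.mp (List.mem_toFinset.mp he)
      exact hinc x hx)
    (fun e he a ha => by
      obtain ⟨⟨e, b⟩, hx, rfl⟩ := List.mem_map.mp (List.mem_toFinset.mp he)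
      obtain ⟨hx, rfl⟩ : (e, b) ∈ h ∧ b = true := by simpa using List.mem_filter.mp hx
      exact mem_discovered_of_mem hx ha)
  rwa [List.toFinset_card_of_nodup hnd, List.length_map,
    List.toFinset_card_of_nodup (hnd.sublist (List.filter_sublist.map _)), List.length_map,
    ← List.countP_eq_length_filter] at hcount

theorem le_openCount_explore_history {D : ℕ} (hD : 2 ≤ D)
    (hdeg : ∀ x, (G.neighborSet x).Finite ∧ (G.neighborSet x).ncard ≤ D)
    {ω : G.edgeSet → Bool} {n : ℕ}
    (hn : (n : ℕ∞) ≤ ((openSubgraph G ω).connectedComponentMk v).supp.encard) :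
    n - 1 ≤ openCount ((explore G v).history ω (D + (D - 1) * (n - 1))) := by
  generalize hm : D + (D - 1) * (n - 1) = m
  have hcard := card_discovered_explore_history_le (v := v) ω m
  rcases (explore G v).history_length_eq_or_stopped ω m with hlen | hstop
  · have hcount := length_add_openCount_le hdeg
      (explore_isFresh.nodup_of_mem_histories ((explore G v).history_mem_histories ω m))
      (exists_mem_discovered_of_mem_explore_history (v := v) ω m)
    rw [hlen] at hcount
    have hsum := hcount.trans (Nat.mul_le_mul_left D hcard)
    refine Nat.le_of_mul_le_mul_left ?_ (by omega : 0 < D - 1)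
    zify [(by omega : 1 ≤ D)] at hsum hm ⊢
    linarith
  · have hsub := supp_subset_discovered hstop ((explore G v).history_consistent ω m)
    have : (n : ℕ∞) ≤ #(discovered v ((explore G v).history ω m)) :=
      hn.trans ((Set.encard_le_encard hsub).trans_eq (Set.encard_coe_eq_coe_finsetCard _))
    have : n ≤ #(discovered v ((explore G v).history ω m)) := by exact_mod_cast this
    omega

omit [DecidableEq V] in
theorem measure_cluster_ge_mul_pow_le {D : ℕ} (hD : 2 ≤ D)
    (hdeg : ∀ x, (G.neighborSet x).Finite ∧ (G.neighborSet x).ncard ≤ D)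
    {ℙ : Measure (G.edgeSet → Bool)} {p : ℝ} (hℙ : IsBernoulliPercolation G ℙ p)
    {c : ℝ≥0∞} (hc : 1 ≤ c) (v : V) (n : ℕ) :
    ℙ {ω | (n : ℕ∞) ≤ ((openSubgraph G ω).connectedComponentMk v).supp.encard} * c ^ (n - 1) ≤
      (ENNReal.ofReal p * c + ENNReal.ofReal (1 - p)) ^ (D + (D - 1) * (n - 1)) := by
  classical
  calc _ ≤ ℙ {ω | n - 1 ≤ openCount ((explore G v).history ω (D + (D - 1) * (n - 1)))} *
        c ^ (n - 1) := by
        gcongr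
        exact le_openCount_explore_history hD hdeg
    _ ≤ _ := explore_isFresh.measure_le_openCount_mul_pow_le hℙ hc _ _

omit [DecidableEq V] in
theorem measure_cluster_ge_le {D : ℕ} (hD : 2 ≤ D)
    (hdeg : ∀ x, (G.neighborSet x).Finite ∧ (G.neighborSet x).ncard ≤ D)
    {ℙ : Measure (G.edgeSet → Bool)} {p : ℝ} (hℙ : IsBernoulliPercolation G ℙ p)
    (hp0 : 0 ≤ p) (hp1 : p ≤ 1) {c : ℝ} (hc : 1 ≤ c) (v : V) (n : ℕ) :
    ℙ {ω | (n : ℕ∞) ≤ ((openSubgraph G ω).connectedComponentMk v).supp.encard} ≤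
      ENNReal.ofReal ((1 + p * (c - 1)) ^ (D + (D - 1) * (n - 1)) / c ^ (n - 1)) := by
  have hbound := measure_cluster_ge_mul_pow_le hD hdeg hℙ (ENNReal.one_le_ofReal.mpr hc) v n
  have hZ : ENNReal.ofReal p * ENNReal.ofReal c + ENNReal.ofReal (1 - p) =
      ENNReal.ofReal (1 + p * (c - 1)) := by
    rw [← ENNReal.ofReal_mul hp0, ← ENNReal.ofReal_add (by positivity) (by linarith)]
    ring_nf
  rw [hZ, ← ENNReal.ofReal_pow (by linarith), ← ENNReal.ofReal_pow (by nlinarith)] at hbound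
  have hcn : 0 < c ^ (n - 1) := by positivity
  rwa [ENNReal.ofReal_div_of_pos hcn, ENNReal.le_div_iff_mul_le
    (Or.inl (ENNReal.ofReal_pos.mpr hcn).ne') (Or.inl ENNReal.ofReal_ne_top)]

end Percolation

theorem cluster_size_distribution_uniform_exponential_decay_general
    (d : ℕ) (r : ℝ) (D : ℕ) (hD : 2 ≤ D) (l_max : ℝ)
    (p : ℝ) (hp0 : 0 ≤ p) (hp : p < 1 / ((D : ℝ) - 1)) :
    ∃ lam : ℝ, 0 < lam ∧
      ∀ (V : Set (EuclideanSpace ℝ (Fin d))) (G : SimpleGraph V),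
        V.Countable →
        (∀ x : EuclideanSpace ℝ (Fin d),
          Set.Subsingleton {y : EuclideanSpace ℝ (Fin d) | y ∈ V ∧ dist y x < r}) →
        (∀ v : V, (G.neighborSet v).Finite ∧ (G.neighborSet v).ncard ≤ D) →
        (∀ u w : V, G.Adj u w → dist u w ≤ l_max) →
        ∀ (ℙ : Measure (G.edgeSet → Bool)), IsProbabilityMeasure ℙ →
          IsBernoulliPercolation G ℙ p →
          ∀ (v : V) (n : ℕ), 1 ≤ n →
            ℙ {ω | (n : ℕ∞) ≤ ((openSubgraph G ω).connectedComponentMk v).supp.encard}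
              ≤ ENNReal.ofReal (2 * Real.exp (-(n : ℝ) * lam)) := by
  have hk : ((D - 1 : ℕ) : ℝ) = D - 1 := by rw [Nat.cast_sub (by omega), Nat.cast_one]
  have hk1 : (1 : ℝ) ≤ D - 1 := by rw [← hk]; exact_mod_cast (by omega : 1 ≤ D - 1)
  have hpk : p * (D - 1 : ℕ) < 1 := by rw [hk]; exact (lt_div_iff₀ (by linarith)).mp hp
  have hp1 : p ≤ 1 := by nlinarith
  obtain ⟨c, hc1, hc2, hck⟩ := exists_pow_lt_of_mul_lt_one hp0 hp1 hpk
  set Z := 1 + p * (c - 1)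
  set ρ := Z ^ (D - 1) / c
  have hρ0 : 0 < ρ := div_pos (pow_pos (by nlinarith) _) (by linarith)
  have hρ1 : ρ < 1 := (div_lt_one (by linarith)).mpr hck
  refine ⟨-Real.log ρ, neg_pos.mpr (Real.log_neg hρ0 hρ1),
    fun V G _ _ hdeg _ ℙ _ hℙ v n hn => ?_⟩
  refine (Percolation.measure_cluster_ge_le hD hdeg hℙ hp0 hp1 hc1 v n).trans
    (ENNReal.ofReal_le_ofReal ?_)
  calc Z ^ (D + (D - 1) * (n - 1)) / c ^ (n - 1) = Z * c * ρ ^ n :=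
        pow_add_mul_div_pow_eq (by positivity) (by omega) hn
    _ ≤ 2 * ρ ^ n := by gcongr
    _ = 2 * Real.exp (-(n : ℝ) * -Real.log ρ) := by
        rw [neg_mul_neg, Real.exp_nat_mul, Real.exp_log hρ0]

/-- Fix `d ∈ ℕ`, `r > 0`, `D ≥ 2`, `l_max ∈ (0,∞)` and `p ∈ [0, 1/(D−1))`.
Then there exists a constant `λ(p) ∈ (0,∞)` such that, uniformly over all simple graphs
`G = (V,E)` with `V ⊆ ℝ^d` uniformly discrete of radius `r`, all degrees at most `D` and all
edges of length at most `l_max`, and uniformly over all `v ∈ V` and `n ≥ 1`, one has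
`ℙ_p(|C_v| ≥ n) ≤ 2·exp(−n λ(p))`. -/
theorem cluster_size_distribution_uniform_exponential_decay
    (d : ℕ) (r : ℝ) (hr : 0 < r) (D : ℕ) (hD : 2 ≤ D) (l_max : ℝ) (hl : 0 < l_max)
    (p : ℝ) (hp0 : 0 ≤ p) (hp : p < 1 / ((D : ℝ) - 1)) :
    ∃ lam : ℝ, 0 < lam ∧
      ∀ (V : Set (EuclideanSpace ℝ (Fin d))) (G : SimpleGraph V),
        V.Countable →
        (∀ x : EuclideanSpace ℝ (Fin d),
          Set.Subsingleton {y : EuclideanSpace ℝ (Fin d) | y ∈ V ∧ dist y x < r}) →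
        (∀ v : V, (G.neighborSet v).Finite ∧ (G.neighborSet v).ncard ≤ D) →
        (∀ u w : V, G.Adj u w → dist u w ≤ l_max) →
        ∀ (ℙ : Measure (G.edgeSet → Bool)), IsProbabilityMeasure ℙ →
          IsBernoulliPercolation G ℙ p →
          ∀ (v : V) (n : ℕ), 1 ≤ n →
            ℙ {ω | (n : ℕ∞) ≤ ((openSubgraph G ω).connectedComponentMk v).supp.encard}
              ≤ ENNReal.ofReal (2 * Real.exp (-(n : ℝ) * lam)) :=
  cluster_size_distribution_uniform_exponential_decay_general d r D hD l_max p hp0 hp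
end
end
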